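/- arXiv:1202.1833 — 2 statements merged into one kernel-verified Lean document; each statement's English description precedes it below -/
import Mathlib

section
/- Let C be a nonempty permutation class. Then (i) the substitution closure ⟨C⟩ contains exactly the same simple permutations as C, and (ii) a permutation class D is contained in ⟨C⟩ if and only if every simple permutation belonging to D belongs to C. -/
open scoped BigOperators

/-- A permutation of length `n`, in the combinatorial sense. -/
abbrev PermOf (n : ℕ) : Type := Equiv.Perm (Fin n)

/-- Pattern containment between permutations of possibly different lengths. -/
def PattContains {k n : ℕ} (σ : PermOf k) (π : PermOf n) : Prop :=
  ∃ f : Fin k ↪o Fin n, ∀ s t : Fin k, σ s < σ t ↔ π (f s) < π (f t)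

/-- A permutation of arbitrary finite length. -/
abbrev Permutation : Type := Σ n : ℕ, PermOf n

/-- The containment order on permutations. -/
def PermLe (σ π : Permutation) : Prop := PattContains σ.2 π.2

/-- A permutation class: a set of permutations closed downwards under containment. -/
def IsPermClass (C : Set Permutation) : Prop :=
  ∀ σ π : Permutation, PermLe σ π → π ∈ C → σ ∈ C

/-- The generating function of a set of permutations. -/
noncomputable def gfOf (C : Set Permutation) : PowerSeries ℚ :=
  PowerSeries.mk fun n => ({π : PermOf n | (⟨n, π⟩ : Permutation) ∈ C}.ncard : ℚ)

/-- A formal power series is rational if it satisfies `q * f = p` for polynomials `p, q`, `q ≠ 0`. -/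
def IsRationalPS (f : PowerSeries ℚ) : Prop :=
  ∃ p q : Polynomial ℚ, q ≠ 0 ∧
    (Polynomial.coeToPowerSeries.ringHom q) * f = Polynomial.coeToPowerSeries.ringHom p

/-- A formal power series is algebraic if `P(x, f) = 0` for a nonzero polynomial `P` in two
variables over `ℚ` (viewed as a polynomial in the second variable with polynomial coefficients). -/
def IsAlgebraicPS (f : PowerSeries ℚ) : Prop :=
  ∃ P : Polynomial (Polynomial ℚ), P ≠ 0 ∧
    Polynomial.eval₂ Polynomial.coeToPowerSeries.ringHom f P = 0

/-- A set of permutations is partially well-ordered if it contains no infinite antichain. -/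
def IsPwoClass (C : Set Permutation) : Prop :=
  ∀ A : Set Permutation, A ⊆ C →
    (∀ x ∈ A, ∀ y ∈ A, x ≠ y → ¬ PermLe x y) → A.Finite

/-- The basis of a class: the minimal permutations not in it. -/
def basisOf (C : Set Permutation) : Set Permutation :=
  {π | π ∉ C ∧ ∀ σ, PermLe σ π → σ ≠ π → σ ∈ C}

def FinitelyBased (C : Set Permutation) : Prop := (basisOf C).Finite

/-- The order-preserving equivalence between a lexicographic sigma of `Fin`s and `Fin` of the sum,
sending `⟨i, j⟩` to `n 0 + ⋯ + n (i-1) + j`. -/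
def sigmaFinFstEquiv {m : ℕ} (β : Fin (m + 1) → Type*) :
    (Σ i : Fin (m + 1), β i) ≃ (β 0 ⊕ Σ i : Fin m, β i.succ) where
  toFun x := Fin.cases (motive := fun i => β i → β 0 ⊕ Σ i : Fin m, β i.succ)
    Sum.inl (fun i j => Sum.inr ⟨i, j⟩) x.1 x.2
  invFun s := Sum.elim (fun j => ⟨0, j⟩) (fun p => ⟨p.1.succ, p.2⟩) s
  left_inv := by
    rintro ⟨i, j⟩
    induction i using Fin.cases <;> simp
  right_inv := by
    rintro (j | ⟨i, j⟩) <;> simp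

def sigmaFinEquiv : ∀ {m : ℕ} {n : Fin m → ℕ}, (Σ i : Fin m, Fin (n i)) ≃ Fin (∑ i, n i)
  | 0, n =>
    { toFun := fun x => x.1.elim0
      invFun := fun p => (Fin.cast (by simp) p : Fin 0).elim0
      left_inv := fun x => x.1.elim0
      right_inv := fun p => (Fin.cast (by simp) p : Fin 0).elim0 }
  | m + 1, n =>
    (sigmaFinFstEquiv fun i => Fin (n i)).trans <|
      ((Equiv.refl (Fin (n 0))).sumCongr sigmaFinEquiv).trans <|
        finSumFinEquiv.trans (finCongr (Fin.sum_univ_succ n).symm)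

/-- The inflation `σ[α 0, …, α (m-1)]` of `σ` by the permutations `α i`. -/
noncomputable def inflation {m : ℕ} (σ : PermOf m) {n : Fin m → ℕ}
    (α : ∀ i, PermOf (n i)) : PermOf (∑ i, n i) :=
  sigmaFinEquiv.symm.trans <|
    (Equiv.sigmaCongrRight fun i =>
        (α i).trans (finCongr (congrArg n (σ.symm_apply_apply i).symm))).trans <|
      (Equiv.sigmaCongrLeft (β := fun v : Fin m => Fin (n (σ.symm v))) σ).trans <|
        sigmaFinEquiv.trans (finCongr (Equiv.sum_comp σ.symm n))

/-- The direct sum `x ⊕ y` of two permutations. -/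
def dsum {a b : ℕ} (x : PermOf a) (y : PermOf b) : PermOf (a + b) :=
  finSumFinEquiv.symm.trans ((Equiv.sumCongr x y).trans finSumFinEquiv)

/-- The skew sum `x ⊖ y` of two permutations. -/
def ssum {a b : ℕ} (x : PermOf a) (y : PermOf b) : PermOf (a + b) :=
  finSumFinEquiv.symm.trans <| (Equiv.sumCongr x y).trans <|
    (Equiv.sumComm (Fin a) (Fin b)).trans <| finSumFinEquiv.trans (finCongr (Nat.add_comm b a))

def onePerm : Permutation := ⟨1, Equiv.refl _⟩

def perm12 : PermOf 2 := Equiv.refl _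

def perm21 : PermOf 2 := Equiv.swap 0 1

/-- Sums and skew sums at the level of `Permutation`. -/
def psum (x y : Permutation) : Permutation := ⟨x.1 + y.1, dsum x.2 y.2⟩

def pskew (x y : Permutation) : Permutation := ⟨x.1 + y.1, ssum x.2 y.2⟩

/-- Two permutations (of possibly different declared lengths) are the same pattern. -/
def SamePatt {a b : ℕ} (x : PermOf a) (y : PermOf b) : Prop :=
  PattContains x y ∧ PattContains y x

/-- The pattern (subpermutation) of `π` on a set `s` of positions. -/
noncomputable def pattOn {N : ℕ} (π : PermOf N) (s : Finset (Fin N)) : PermOf s.card :=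
  (Tuple.sort fun p : Fin s.card => π ((s.orderIsoOfFin rfl p : Fin N))).symm

def SumDecomposable (π : Permutation) : Prop :=
  ∃ x y : Permutation, 0 < x.1 ∧ 0 < y.1 ∧ π = psum x y

def SkewDecomposable (π : Permutation) : Prop :=
  ∃ x y : Permutation, 0 < x.1 ∧ 0 < y.1 ∧ π = pskew x y

/-- The property (set) of sum decomposable permutations. -/
def DSumSet : Set Permutation := {π | SumDecomposable π}

/-- The property (set) of skew decomposable permutations. -/
def DSkewSet : Set Permutation := {π | SkewDecomposable π}

/-- `t` is a sum splitting point of `x`: positions `≥ t` carry exactly the values `≥ t`. -/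
def SumSplitAt {a : ℕ} (x : PermOf a) (t : ℕ) : Prop :=
  ∀ p : Fin a, t ≤ (p : ℕ) ↔ t ≤ (x p : ℕ)

/-- `t` is a skew splitting point of `x`: positions `< t` carry exactly the values `≥ a - t`. -/
def SkewSplitAt {a : ℕ} (x : PermOf a) (t : ℕ) : Prop :=
  ∀ p : Fin a, (p : ℕ) < t ↔ a - t ≤ (x p : ℕ)

/-- `γ` is a sum-suffix of `x`. -/
def IsSumSuffixOf {b a : ℕ} (γ : PermOf b) (x : PermOf a) : Prop :=
  ∃ t, SumSplitAt x t ∧ SamePatt γ (pattOn x (Finset.univ.filter fun p => t ≤ (p : ℕ)))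

def IsSumPrefixOf {b a : ℕ} (γ : PermOf b) (x : PermOf a) : Prop :=
  ∃ t, SumSplitAt x t ∧ SamePatt γ (pattOn x (Finset.univ.filter fun p => (p : ℕ) < t))

def IsSkewSuffixOf {b a : ℕ} (γ : PermOf b) (x : PermOf a) : Prop :=
  ∃ t, SkewSplitAt x t ∧ SamePatt γ (pattOn x (Finset.univ.filter fun p => t ≤ (p : ℕ)))

def IsSkewPrefixOf {b a : ℕ} (γ : PermOf b) (x : PermOf a) : Prop :=
  ∃ t, SkewSplitAt x t ∧ SamePatt γ (pattOn x (Finset.univ.filter fun p => (p : ℕ) < t))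

/-- Length of the first sum component. -/
noncomputable def fscLen {a : ℕ} (x : PermOf a) : ℕ := sInf {t | 1 ≤ t ∧ SumSplitAt x t}

noncomputable def firstSumComp {a : ℕ} (x : PermOf a) : Permutation :=
  ⟨_, pattOn x (Finset.univ.filter fun p => (p : ℕ) < fscLen x)⟩

noncomputable def fskLen {a : ℕ} (x : PermOf a) : ℕ := sInf {t | 1 ≤ t ∧ SkewSplitAt x t}

noncomputable def firstSkewComp {a : ℕ} (x : PermOf a) : Permutation :=
  ⟨_, pattOn x (Finset.univ.filter fun p => (p : ℕ) < fskLen x)⟩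

open Classical in
/-- The first component of a permutation. -/
noncomputable def firstComp (π : Permutation) : Permutation :=
  if π ∈ DSumSet then firstSumComp π.2
  else if π ∈ DSkewSet then firstSkewComp π.2
  else π

/-- The inflation `C[U]` of one set of permutations by another. -/
def classInflate (C U : Set Permutation) : Set Permutation :=
  {π | ∃ (m : ℕ) (σ : PermOf m) (n : Fin m → ℕ) (α : ∀ i, PermOf (n i)),
      (⟨m, σ⟩ : Permutation) ∈ C ∧ (∀ i, 0 < n i) ∧
      (∀ i, (⟨n i, α i⟩ : Permutation) ∈ U) ∧ π = ⟨∑ i, n i, inflation σ α⟩}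

/-- A class is substitution closed if `C[C] ⊆ C`. -/
def SubstClosed (C : Set Permutation) : Prop := classInflate C C ⊆ C

/-- The substitution closure: the smallest substitution closed class containing `C`. -/
def substClosure (C : Set Permutation) : Set Permutation :=
  ⋂₀ {D | IsPermClass D ∧ SubstClosed D ∧ C ⊆ D}

/-- Iterated inflations: `C^[0] = {1}` and `C^[i+1] = C[C^[i]]`. -/
def iterInflate (C : Set Permutation) : ℕ → Set Permutation
  | 0 => {onePerm}
  | i + 1 => classInflate C (iterInflate C i)

/-- The class of one-point extensions of members of `C`. -/
def onePointExt (C : Set Permutation) : Set Permutation :=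
  {π | ∃ σ : Permutation, σ ∈ C ∧ σ.1 + 1 = π.1 ∧ PermLe σ π}

/-- A set of indices is contiguous. -/
def IsIntervalSet {n : ℕ} (s : Set (Fin n)) : Prop :=
  ∀ ⦃x⦄, x ∈ s → ∀ ⦃y⦄, y ∈ s → ∀ ⦃z⦄, x ≤ z → z ≤ y → z ∈ s

/-- `s` is an interval of the permutation `π`: both `s` and its image are contiguous. -/
def IsPermInterval {n : ℕ} (π : PermOf n) (s : Set (Fin n)) : Prop :=
  IsIntervalSet s ∧ IsIntervalSet (π '' s)

/-- A permutation is simple if it has length at least 2 and only trivial intervals. -/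
def IsSimple {n : ℕ} (π : PermOf n) : Prop :=
  2 ≤ n ∧ ∀ s : Set (Fin n), IsPermInterval π s → s.ncard ≤ 1 ∨ s = Set.univ

/-- The standard figure of a 0/±1 matrix (entries indexed (column, row), zero-based). -/
def stdFigure {t u : ℕ} (M : Fin t → Fin u → ℤ) : Set (ℝ × ℝ) :=
  {p | ∃ (k : Fin t) (l : Fin u) (s : ℝ), 0 ≤ s ∧ s ≤ 1 ∧
    ((M k l = 1 ∧ p = ((k : ℝ) + s, (l : ℝ) + s)) ∨
     (M k l = -1 ∧ p = ((k : ℝ) + s, (l : ℝ) + 1 - s)))}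

/-- The geometric grid class of a 0/±1 matrix. -/
def geomGridClass {t u : ℕ} (M : Fin t → Fin u → ℤ) : Set Permutation :=
  {π | ∃ p : Fin π.1 → ℝ × ℝ, (∀ i, p i ∈ stdFigure M) ∧
    (∀ i j : Fin π.1, i < j → (p i).1 < (p j).1) ∧
    (∀ i j : Fin π.1, π.2 i < π.2 j ↔ (p i).2 < (p j).2)}

/-- A set of permutations is geometrically griddable if it lies in some geometric grid class. -/
def GeomGriddable (C : Set Permutation) : Prop :=
  ∃ (t u : ℕ) (M : Fin t → Fin u → ℤ),
    (∀ k l, M k l = 0 ∨ M k l = 1 ∨ M k l = -1) ∧ C ⊆ geomGridClass M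

/-- A class is strongly rational if it and all of its subclasses have rational
generating functions. -/
def StronglyRational (C : Set Permutation) : Prop :=
  IsRationalPS (gfOf C) ∧ ∀ D, D ⊆ C → IsPermClass D → IsRationalPS (gfOf D)

/-- The interval of indices `[lo, hi)` inside `Fin m`, as a finset. -/
def idxIval (m lo hi : ℕ) : Finset (Fin m) :=
  Finset.univ.filter fun i => lo ≤ (i : ℕ) ∧ (i : ℕ) < hi

/-- `θ[γ]` is a `U`-decomposition of `π`. -/
def IsUDecompOf (U : Set Permutation) (π : Permutation) {m : ℕ} (θ : PermOf m)
    (n : Fin m → ℕ) (γ : ∀ i, PermOf (n i)) : Prop :=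
  (∀ i, 0 < n i) ∧ (∀ i, (⟨n i, γ i⟩ : Permutation) ∈ U) ∧ π = ⟨∑ i, n i, inflation θ γ⟩

def HasUDecompSkel (U : Set Permutation) (π θ : Permutation) : Prop :=
  ∃ n γ, IsUDecompOf U π θ.2 n γ

/-- `θ` is the `U`-profile of `π`: the containment-minimal skeleton of a `U`-decomposition. -/
def IsUProfile (U : Set Permutation) (π θ : Permutation) : Prop :=
  HasUDecompSkel U π θ ∧ ∀ θ', HasUDecompSkel U π θ' → PermLe θ θ'

/-- `θ[γ]` is the left-greedy `U`-decomposition of `π`: the skeleton is the `U`-profile and the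
sequence of block lengths is lexicographically maximal. -/
def IsLeftGreedy (U : Set Permutation) (π : Permutation) {m : ℕ} (θ : PermOf m)
    (n : Fin m → ℕ) (γ : ∀ i, PermOf (n i)) : Prop :=
  IsUDecompOf U π θ n γ ∧ IsUProfile U π ⟨m, θ⟩ ∧
    ∀ (n' : Fin m → ℕ) (γ' : ∀ i, PermOf (n' i)), IsUDecompOf U π θ n' γ' → n' ≠ n →
      ∃ i : Fin m, (∀ i' : Fin m, i' < i → n' i' = n i') ∧ n' i < n i

/-- A property is a set of permutations. -/
abbrev PProperty : Type := Set Permutation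

/-- The collection of properties of `P` satisfied by `π`. -/
def propsOf (P : Set PProperty) (π : Permutation) : Set PProperty := {S | S ∈ P ∧ π ∈ S}

/-- A framework: a skeleton together with a set of properties for each position. -/
abbrev Framework : Type := Σ m : ℕ, PermOf m × (Fin m → Set PProperty)

/-- The framework `F` describes `π`. -/
def FwDescribes (P : Set PProperty) (F : Framework) (π : Permutation) : Prop :=
  ∃ (n : Fin F.1 → ℕ) (α : ∀ i, PermOf (n i)), (∀ i, 0 < n i) ∧
    π = ⟨∑ i, n i, inflation F.2.1 α⟩ ∧ ∀ i, propsOf P ⟨n i, α i⟩ = F.2.2 i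

def FwNonempty (P : Set PProperty) (F : Framework) : Prop := ∃ π, FwDescribes P F π

/-- A simple framework: simple skeleton, with the extra condition for skeletons `12`, `21`. -/
def IsSimpleFw (F : Framework) : Prop :=
  IsSimple F.2.1 ∧
  ∀ i : Fin F.1, (i : ℕ) = 0 →
    (SamePatt F.2.1 perm12 → DSumSet ∉ F.2.2 i) ∧
    (SamePatt F.2.1 perm21 → DSkewSet ∉ F.2.2 i)

/-- A family of properties is query-complete. -/
def QueryComplete (P : Set PProperty) : Prop :=
  ∀ (m : ℕ) (σ : PermOf m) (n n' : Fin m → ℕ)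
    (α : ∀ i, PermOf (n i)) (α' : ∀ i, PermOf (n' i)),
    (∀ i, 0 < n i) → (∀ i, 0 < n' i) →
    (∀ i, propsOf P ⟨n i, α i⟩ = propsOf P ⟨n' i, α' i⟩) →
    propsOf P (⟨∑ i, n i, inflation σ α⟩ : Permutation)
      = propsOf P (⟨∑ i, n' i, inflation σ α'⟩ : Permutation)

/-- The avoidance property `Av(δ)`. -/
def AvSet (δ : Permutation) : Set Permutation := {π | ¬ PermLe δ π}

/-- The first component avoidance property `Av^{#1}(δ)`. -/
def AvFCSet (δ : Permutation) : Set Permutation := {π | ¬ PermLe δ (firstComp π)}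

/-- The family of properties `P_B`. -/
def PB (B : Set Permutation) : Set PProperty :=
  {DSumSet, DSkewSet} ∪ {S | ∃ δ, (∃ β ∈ B, PermLe δ β) ∧ S = AvSet δ}

/-- The family of properties `P̃_B`. -/
def PBt (B : Set Permutation) : Set PProperty :=
  PB B ∪ {S | ∃ δ, (∃ β ∈ B, PermLe δ β) ∧ S = AvFCSet δ}

/-- A partial multiplication matrix. -/
def IsPMM {t u : ℕ} (M : Fin t → Fin u → ℤ) : Prop :=
  ∃ (c : Fin t → ℤ) (r : Fin u → ℤ),
    (∀ k, c k = 1 ∨ c k = -1) ∧ (∀ l, r l = 1 ∨ r l = -1) ∧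
    ∀ k l, M k l = c k * r l ∨ M k l = 0

/-- The matrix `M^{×2}`: each line segment of the standard figure is subdivided in two. -/
def mTimes2 {t u : ℕ} (M : Fin t → Fin u → ℤ) : Fin (2 * t) → Fin (2 * u) → ℤ :=
  fun k l =>
    if M ⟨(k : ℕ) / 2, by have := k.isLt; omega⟩ ⟨(l : ℕ) / 2, by have := l.isLt; omega⟩ = 1
        ∧ (k : ℕ) % 2 = (l : ℕ) % 2 then 1
    else if M ⟨(k : ℕ) / 2, by have := k.isLt; omega⟩ ⟨(l : ℕ) / 2, by have := l.isLt; omega⟩ = -1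
        ∧ (k : ℕ) % 2 ≠ (l : ℕ) % 2 then -1
    else 0

/-- A regular language: one accepted by a DFA with finitely many states. -/
def IsRegularLang {A : Type _} (L : Set (List A)) : Prop :=
  ∃ (S : Type) (_ : Fintype S) (M : DFA A S), M.accepts = L

/-- The cell alphabet of a matrix: the nonzero cells. -/
def CellAlph {t u : ℕ} (M : Fin t → Fin u → ℤ) : Type := {kl : Fin t × Fin u // M kl.1 kl.2 ≠ 0}

/-- The point of the standard figure corresponding to the `i`-th letter of a word of cells,
relative to column signs `c` and row signs `r`. -/
noncomputable def pointOfLetter {t u : ℕ} (c : Fin t → ℤ) (r : Fin u → ℤ) (n : ℕ)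
    (w : Fin n → Fin t × Fin u) (i : Fin n) : ℝ × ℝ :=
  (if c (w i).1 = 1 then ((w i).1 : ℝ) + (((i : ℕ) + 1) / (n + 1) : ℝ)
     else ((w i).1 : ℝ) + 1 - (((i : ℕ) + 1) / (n + 1) : ℝ),
   if r (w i).2 = 1 then ((w i).2 : ℝ) + (((i : ℕ) + 1) / (n + 1) : ℝ)
     else ((w i).2 : ℝ) + 1 - (((i : ℕ) + 1) / (n + 1) : ℝ))

/-- The permutation determined by a family of points in the plane with pairwise distinct
coordinates: sort by `x`, rank by `y`. -/
noncomputable def permOfPoints {n : ℕ} (p : Fin n → ℝ × ℝ) : PermOf n :=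
  (Tuple.sort fun i => (p i).1).trans (Tuple.sort fun i => (p i).2).symm

/-- The map `φ^P` from words over `Σ × 2^P` to frameworks, built from the encoding `φ` and the
index correspondence `ψ`. -/
noncomputable def fwOfWord {A : Type _} {t u : ℕ} (c : Fin t → ℤ) (r : Fin u → ℤ)
    (cell : A → Fin t × Fin u) (qs : A → Set PProperty) (v : List A) : Framework :=
  ⟨v.length,
    (permOfPoints (pointOfLetter c r v.length fun j => cell (v.get j)),
     fun i => qs (v.get ((Tuple.sort fun j =>
        (pointOfLetter c r v.length (fun j' => cell (v.get j')) j).1) i)))⟩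

/-- The number of permutations of length `n` in `C`. -/
noncomputable def countLen (C : Set Permutation) (n : ℕ) : ℕ :=
  {π : PermOf n | (⟨n, π⟩ : Permutation) ∈ C}.ncard

section Aux

lemma permLe_refl (π : Permutation) : PermLe π π :=
  ⟨OrderEmbedding.ofStrictMono id strictMono_id, fun _ _ => Iff.rfl⟩

lemma pattContains_trans {a b c : ℕ} {x : PermOf a} {y : PermOf b} {z : PermOf c}
    (h1 : PattContains x y) (h2 : PattContains y z) : PattContains x z := by
  obtain ⟨f, hf⟩ := h1
  obtain ⟨g, hg⟩ := h2
  exact ⟨f.trans g, fun s t => (hf s t).trans (hg (f s) (f t))⟩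

lemma permLe_trans {x y z : Permutation} (h1 : PermLe x y) (h2 : PermLe y z) : PermLe x z :=
  pattContains_trans h1 h2

def ofsF {m : ℕ} (n : Fin m → ℕ) (i : Fin m) : ℕ :=
  ∑ i' ∈ Finset.univ.filter (fun i' : Fin m => (i' : ℕ) < (i : ℕ)), n i'

lemma ofsF_succ {m : ℕ} (n : Fin (m+1) → ℕ) (i : Fin m) :
    ofsF n i.succ = n 0 + ofsF (fun i' => n i'.succ) i := by
  unfold ofsF
  rw [Finset.sum_filter, Finset.sum_filter, Fin.sum_univ_succ]
  simp [Fin.succ_lt_succ_iff]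

lemma ofsF_zero {m : ℕ} (n : Fin (m+1) → ℕ) : ofsF n 0 = 0 := by
  unfold ofsF; simp

lemma sigmaFinEquiv_val : ∀ {m : ℕ} {n : Fin m → ℕ} (x : Σ i, Fin (n i)),
    ((sigmaFinEquiv x : Fin (∑ i, n i)) : ℕ) = ofsF n x.1 + (x.2 : ℕ)
  | 0, n, x => x.1.elim0
  | m+1, n, ⟨i, j⟩ => by
    induction i using Fin.cases with
    | zero => simp [sigmaFinEquiv, sigmaFinFstEquiv, ofsF_zero]
    | succ i =>
      have h := sigmaFinEquiv_val (n := fun i' => n i'.succ) ⟨i, j⟩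
      dsimp only at h
      simp only [sigmaFinEquiv, sigmaFinFstEquiv, Equiv.trans_apply, Equiv.coe_fn_mk,
        Fin.cases_succ, Equiv.sumCongr_apply, Sum.map_inr, finSumFinEquiv_apply_right,
        finCongr_apply, Fin.coe_cast, Fin.coe_natAdd]
      rw [h, ofsF_succ]
      omega

lemma inflation_val {m : ℕ} (σ : PermOf m) {n : Fin m → ℕ} (α : ∀ i, PermOf (n i))
    (i : Fin m) (j : Fin (n i)) :
    ((inflation σ α (sigmaFinEquiv ⟨i, j⟩) : Fin _) : ℕ)
      = ofsF (fun v => n (σ.symm v)) (σ i) + ((α i j : Fin (n i)) : ℕ) := by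
  unfold inflation
  simp only [Equiv.trans_apply, Equiv.symm_apply_apply, Equiv.sigmaCongrRight_apply,
    Equiv.sigmaCongrLeft_apply, finCongr_apply, Fin.coe_cast]
  rw [sigmaFinEquiv_val]
  simp

lemma ofsF_chain {m : ℕ} (w : Fin m → ℕ) {i i' : Fin m} (h : i < i') :
    ofsF w i + w i ≤ ofsF w i' := by
  unfold ofsF
  have hsub : insert i (Finset.univ.filter (fun i'' : Fin m => (i'' : ℕ) < (i : ℕ)))
      ⊆ Finset.univ.filter (fun i'' : Fin m => (i'' : ℕ) < (i' : ℕ)) := by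
    intro a ha
    simp only [Finset.mem_insert, Finset.mem_filter, Finset.mem_univ, true_and] at ha ⊢
    rcases ha with rfl | ha
    · exact h
    · exact ha.trans h
  calc ofsF w i + w i = ∑ a ∈ insert i (Finset.univ.filter
        (fun i'' : Fin m => (i'' : ℕ) < (i : ℕ))), w a := by
        rw [Finset.sum_insert (by simp)]; unfold ofsF; omega
    _ ≤ _ := Finset.sum_le_sum_of_subset hsub

lemma block_lt_iff {m : ℕ} (w : Fin m → ℕ) {i i' : Fin m} {j j' : ℕ}
    (hj : j < w i) (hj' : j' < w i') :
    ofsF w i + j < ofsF w i' + j' ↔ i < i' ∨ (i = i' ∧ j < j') := by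
  rcases lt_trichotomy i i' with h | h | h
  · have := ofsF_chain w h
    constructor
    · intro _; exact Or.inl h
    · intro _; omega
  · subst h
    constructor
    · intro hlt; exact Or.inr ⟨rfl, by omega⟩
    · rintro (h | ⟨-, h⟩)
      · exact absurd h (lt_irrefl _)
      · omega
  · have := ofsF_chain w h
    constructor
    · intro hlt; omega
    · rintro (h' | ⟨rfl, h'⟩)
      · exact absurd (h'.trans h) (lt_irrefl _)
      · exact absurd h (lt_irrefl _)

end Aux

section LemmaA

lemma simple_patt_of_inflation {k m : ℕ} {n : Fin m → ℕ} (τ : PermOf k) (σ : PermOf m)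
    (α : ∀ i, PermOf (n i)) (hτ : IsSimple τ)
    (h : PattContains τ (inflation σ α)) :
    (∃ i, PattContains τ (α i)) ∨ PattContains τ σ := by
  obtain ⟨f, hf⟩ := h
  set w : Fin m → ℕ := fun v => n (σ.symm v) with hw
  set I : Fin k → Fin m := fun s => (sigmaFinEquiv.symm (f s)).1 with hI
  set J : ∀ s, Fin (n (I s)) := fun s => (sigmaFinEquiv.symm (f s)).2 with hJ
  have hfs : ∀ s, f s = sigmaFinEquiv ⟨I s, J s⟩ := fun s =>
    (sigmaFinEquiv.apply_symm_apply (f s)).symm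
  have hpos : ∀ s, ((f s : Fin _) : ℕ) = ofsF n (I s) + ((J s) : ℕ) := fun s => by
    conv_lhs => rw [hfs s]
    exact sigmaFinEquiv_val _
  have hval : ∀ s, ((inflation σ α (f s) : Fin _) : ℕ)
      = ofsF w (σ (I s)) + ((α (I s) (J s)) : ℕ) := fun s => by
    conv_lhs => rw [hfs s]
    exact inflation_val σ α (I s) (J s)
  have hJlt : ∀ s, ((α (I s) (J s)) : ℕ) < w (σ (I s)) := fun s => by
    simpa only [hw, Equiv.symm_apply_apply] using (α (I s) (J s)).isLt
  have hcmp : ∀ s t, τ s < τ t ↔ (σ (I s) < σ (I t) ∨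
      (σ (I s) = σ (I t) ∧ ((α (I s) (J s)) : ℕ) < ((α (I t) (J t)) : ℕ))) := by
    intro s t
    rw [hf s t, Fin.lt_def, hval s, hval t, block_lt_iff w (hJlt s) (hJlt t)]
  have hposcmp : ∀ s t, s < t ↔ (I s < I t ∨ (I s = I t ∧ ((J s) : ℕ) < ((J t) : ℕ))) := by
    intro s t
    rw [← f.lt_iff_lt, Fin.lt_def, hpos s, hpos t, block_lt_iff n (J s).isLt (J t).isLt]
  have hImono : Monotone I := by
    intro s t hst
    rcases eq_or_lt_of_le hst with rfl | hlt
    · exact le_refl _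
    · rcases (hposcmp s t).mp hlt with h' | ⟨h', -⟩
      · exact le_of_lt h'
      · exact le_of_eq h'
  have hIvmono : ∀ s t, τ s ≤ τ t → σ (I s) ≤ σ (I t) := by
    intro s t hst
    rcases eq_or_lt_of_le hst with heq | hlt
    · exact le_of_eq (congrArg (σ ∘ I) (τ.injective heq))
    · rcases (hcmp s t).mp hlt with h' | ⟨h', -⟩
      · exact le_of_lt h'
      · exact le_of_eq h'
  have hinterval : ∀ i₀ : Fin m, IsPermInterval τ {s | I s = i₀} := by
    intro i₀
    constructor
    · intro x hx y hy z hxz hzy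
      have h1 : I x ≤ I z := hImono hxz
      have h2 : I z ≤ I y := hImono hzy
      simp only [Set.mem_setOf_eq] at hx hy ⊢
      rw [hx] at h1; rw [hy] at h2
      exact le_antisymm h2 h1
    · rintro a ⟨x, hx, rfl⟩ b ⟨y, hy, rfl⟩ z h1 h2
      refine ⟨τ.symm z, ?_, τ.apply_symm_apply z⟩
      rw [← τ.apply_symm_apply z] at h1 h2
      have g1 := hIvmono _ _ h1
      have g2 := hIvmono _ _ h2
      simp only [Set.mem_setOf_eq] at hx hy ⊢
      rw [hx] at g1; rw [hy] at g2
      exact σ.injective (le_antisymm g2 g1)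
  by_cases hex : ∃ i₀ : Fin m, {s | I s = i₀} = Set.univ
  · left
    obtain ⟨i₀, hS⟩ := hex
    have hall : ∀ s, I s = i₀ := fun s => Set.eq_univ_iff_forall.mp hS s
    have hcast : ∀ (i : Fin m) (hi : i = i₀) (j : Fin (n i)),
        ((α i j) : ℕ) = ((α i₀ ⟨(j : ℕ), hi ▸ j.isLt⟩) : ℕ) := by
      rintro i rfl j; rfl
    set J0 : Fin k → Fin (n i₀) := fun s => ⟨((J s) : ℕ), (hall s) ▸ (J s).isLt⟩ with hJ0
    have hJ0mono : StrictMono J0 := by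
      intro s t hst
      rcases (hposcmp s t).mp hst with h' | ⟨-, h'⟩
      · rw [hall s, hall t] at h'; exact absurd h' (lt_irrefl _)
      · exact h'
    refine ⟨i₀, OrderEmbedding.ofStrictMono J0 hJ0mono, fun s t => ?_⟩
    rw [hcmp s t]
    constructor
    · rintro (h' | ⟨-, h'⟩)
      · rw [hall s, hall t] at h'
        exact absurd h' (lt_irrefl _)
      · show α i₀ (J0 s) < α i₀ (J0 t)
        rw [Fin.lt_def]
        rwa [hcast (I s) (hall s) (J s), hcast (I t) (hall t) (J t)] at h'
    · intro h'
      refine Or.inr ⟨by rw [hall s, hall t], ?_⟩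
      rw [hcast (I s) (hall s) (J s), hcast (I t) (hall t) (J t)]
      rw [Fin.lt_def] at h'
      exact h'
  · right
    have h1 : ∀ i₀ : Fin m, {s | I s = i₀}.ncard ≤ 1 := fun i₀ =>
      (hτ.2 _ (hinterval i₀)).resolve_right (fun h' => hex ⟨i₀, h'⟩)
    have hIinj : Function.Injective I := by
      intro s t hst
      exact (Set.ncard_le_one (Set.toFinite _)).mp (h1 (I t)) s hst t rfl
    have hImono' : StrictMono I := hImono.strictMono_of_injective hIinj
    refine ⟨OrderEmbedding.ofStrictMono I hImono', fun s t => ?_⟩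
    rw [hcmp s t]
    show _ ↔ _
    constructor
    · rintro (h' | ⟨he, hj⟩)
      · exact h'
      · obtain rfl := hIinj (σ.injective he)
        exact absurd hj (lt_irrefl _)
    · exact Or.inl

end LemmaA

section Helpers

lemma sum_ite_eq_card_add {m : ℕ} (x0 : Fin m) (bb : ℕ) (hbb : 1 ≤ bb) (F : Finset (Fin m)) :
    ∑ i ∈ F, (if i = x0 then bb else 1) = F.card + (if x0 ∈ F then bb - 1 else 0) := by
  have h1 : ∀ i ∈ F, (if i = x0 then bb else 1) = 1 + (if i = x0 then bb - 1 else 0) := by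
    intro i _
    split_ifs <;> omega
  rw [Finset.sum_congr rfl h1, Finset.sum_add_distrib, Finset.sum_const, smul_eq_mul, mul_one,
    Finset.sum_ite_eq' F x0 (fun _ => bb - 1)]

lemma ofsF_ite {m : ℕ} (x0 : Fin m) (bb : ℕ) (hbb : 1 ≤ bb) (v : Fin m) :
    ofsF (fun i => if i = x0 then bb else 1) v
      = if (v : ℕ) ≤ (x0 : ℕ) then (v : ℕ) else (v : ℕ) + bb - 1 := by
  unfold ofsF
  rw [sum_ite_eq_card_add x0 bb hbb]
  have hfil : (Finset.univ.filter fun v' : Fin m => (v':ℕ) < (v:ℕ)) = Finset.Iio v := by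
    ext x
    simp only [Finset.mem_filter, Finset.mem_univ, true_and, Finset.mem_Iio, Fin.lt_def]
  rw [hfil, Fin.card_Iio]
  simp only [Finset.mem_Iio, Fin.lt_def]
  split_ifs <;> omega

lemma sum_n_ite {m : ℕ} (x0 : Fin m) (bb : ℕ) (hbb : 1 ≤ bb) :
    ∑ i : Fin m, (if i = x0 then bb else 1) = m + bb - 1 := by
  rw [sum_ite_eq_card_add x0 bb hbb]
  simp only [Finset.mem_univ, if_true, Finset.card_univ, Fintype.card_fin]
  omega

lemma interval_set_exists {N : ℕ} {s : Set (Fin N)} (hs : IsIntervalSet s) (hne : s.Nonempty) :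
    ∃ a bb : ℕ, 0 < bb ∧ a + bb ≤ N ∧ bb = s.ncard ∧
      ∀ p : Fin N, p ∈ s ↔ a ≤ (p : ℕ) ∧ (p : ℕ) < a + bb := by
  classical
  have hfin : s.Finite := Set.toFinite s
  set F : Finset (Fin N) := hfin.toFinset with hF
  have hFne : F.Nonempty := by
    rwa [hF, Set.Finite.toFinset_nonempty]
  set lo := F.min' hFne with hlo
  set hi := F.max' hFne with hhi
  have hlos : lo ∈ s := by
    have := F.min'_mem hFne
    rwa [Set.Finite.mem_toFinset] at this
  have hhis : hi ∈ s := by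
    have := F.max'_mem hFne
    rwa [Set.Finite.mem_toFinset] at this
  have hmem : ∀ p : Fin N, p ∈ s ↔ lo ≤ p ∧ p ≤ hi := by
    intro p
    constructor
    · intro hp
      have hp' : p ∈ F := by rwa [Set.Finite.mem_toFinset]
      exact ⟨F.min'_le p hp', F.le_max' p hp'⟩
    · rintro ⟨h1, h2⟩
      exact hs hlos hhis h1 h2
  have hIcc : s = ↑(Finset.Icc lo hi) := by
    ext p
    rw [hmem p, Finset.coe_Icc]
    exact Iff.rfl
  have hcard : s.ncard = (hi : ℕ) + 1 - (lo : ℕ) := by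
    rw [hIcc, Set.ncard_coe_finset, Fin.card_Icc]
  refine ⟨(lo : ℕ), (hi : ℕ) + 1 - (lo : ℕ), ?_, ?_, hcard.symm, ?_⟩
  · have : (lo : ℕ) ≤ (hi : ℕ) := (hmem lo).mp hlos |>.2
    omega
  · have := hi.isLt
    have : (lo : ℕ) ≤ (hi : ℕ) := (hmem lo).mp hlos |>.2
    omega
  · intro p
    rw [hmem p, Fin.le_def, Fin.le_def]
    have : (lo : ℕ) ≤ (hi : ℕ) := (hmem lo).mp hlos |>.2
    omega

lemma pattContains_of_len_one {c N : ℕ} (x : PermOf c) (hc : c = 1) (π : PermOf N)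
    (hN : 1 ≤ N) : PattContains x π := by
  subst hc
  refine ⟨OrderEmbedding.ofStrictMono (fun _ => ⟨0, hN⟩) ?_, fun s t => ?_⟩
  · intro s t hst
    exact absurd (Subsingleton.elim s t) (ne_of_lt hst)
  · obtain rfl : s = t := Subsingleton.elim s t
    simp

lemma perm_sigma_eq {M N : ℕ} (h : M = N) (f : PermOf M) (g : PermOf N)
    (hfg : ∀ p : Fin M, ((f p : Fin M) : ℕ) = ((g ⟨(p : ℕ), h ▸ p.isLt⟩ : Fin N) : ℕ)) :
    (⟨N, g⟩ : Permutation) = ⟨M, f⟩ := by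
  subst h
  have : f = g := Equiv.ext fun p => Fin.ext (hfg p)
  rw [this]

end Helpers

section LemmaB

lemma decomp_of_not_simple {N : ℕ} (π : PermOf N) (hN : 2 ≤ N) (hns : ¬ IsSimple π) :
    ∃ (m : ℕ) (θ : PermOf m) (n : Fin m → ℕ) (γ : ∀ i, PermOf (n i)),
      m < N ∧ (∀ i, 0 < n i) ∧ (∀ i, n i < N) ∧
      PattContains θ π ∧ (∀ i, PattContains (γ i) π) ∧
      (⟨N, π⟩ : Permutation) = ⟨∑ i, n i, inflation θ γ⟩ := by
  classical
  have hns' : ¬ ∀ s : Set (Fin N), IsPermInterval π s → s.ncard ≤ 1 ∨ s = Set.univ :=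
    fun h => hns ⟨hN, h⟩
  push_neg at hns'
  obtain ⟨s, hsPI, hcard, hsuniv⟩ := hns'
  have hcard2 : 2 ≤ s.ncard := by omega
  have hsne : s.Nonempty := Set.nonempty_of_ncard_ne_zero (by omega)
  obtain ⟨a, b, hb0, hab, hbcard, hmem⟩ := interval_set_exists hsPI.1 hsne
  obtain ⟨c, b', hb'0, hcb', hb'card, hmem'⟩ := interval_set_exists hsPI.2 (hsne.image π)
  have hbb' : b' = b := by
    rw [hb'card, Set.ncard_image_of_injective s π.injective, ← hbcard]
  rw [hbb'] at hb'0 hcb' hmem'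
  have hb2 : 2 ≤ b := by omega
  have hbN : b < N := by
    have h1 : s.ncard < Set.univ.ncard :=
      Set.ncard_lt_ncard (Set.ssubset_univ_iff.mpr hsuniv) (Set.toFinite _)
    rw [Set.ncard_univ, Nat.card_eq_fintype_card, Fintype.card_fin] at h1
    omega
  set m := N - b + 1 with hm
  have hm2 : 2 ≤ m := by omega
  have hmN : m < N := by omega
  have haM : a < m := by omega
  have hcM : c < m := by omega
  have hmemv : ∀ p : Fin N,
      (a ≤ (p : ℕ) ∧ (p : ℕ) < a + b) ↔
      (c ≤ ((π p : Fin N) : ℕ) ∧ ((π p : Fin N) : ℕ) < c + b) := by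
    intro p
    rw [← hmem p]
    constructor
    · intro hp
      exact (hmem' (π p)).mp ⟨p, hp, rfl⟩
    · intro hp
      obtain ⟨q, hq, hqe⟩ := (hmem' (π p)).mpr hp
      rwa [← π.injective hqe]
  set aIdx : Fin m := ⟨a, haM⟩ with haIdx
  set cIdx : Fin m := ⟨c, hcM⟩ with hcIdx
  set Kv : Fin m → ℕ := fun i => if (i : ℕ) ≤ a then (i : ℕ) else (i : ℕ) + b - 1 with hKv
  have hKvlt : ∀ i : Fin m, Kv i < N := by
    intro i
    have := i.isLt
    simp only [hKv]
    split_ifs <;> omega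
  set K : Fin m → Fin N := fun i => ⟨Kv i, hKvlt i⟩ with hK
  set vc : ℕ → ℕ := fun y => if y < c then y else if y < c + b then c else y - b + 1 with hvc
  have hvclt : ∀ y, y < N → vc y < m := by
    intro y hy
    simp only [hvc]
    split_ifs <;> omega
  set T : Fin m → Fin m := fun i => ⟨vc ((π (K i) : Fin N) : ℕ), hvclt _ (Fin.isLt _)⟩ with hT
  have hKs : ∀ i : Fin m, (a ≤ Kv i ∧ Kv i < a + b) ↔ (i : ℕ) = a := by
    intro i
    simp only [hKv]
    split_ifs <;> omega
  have hKinj : Function.Injective K := by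
    intro i i' he
    have h1 : Kv i = Kv i' := congrArg Fin.val he
    simp only [hKv] at h1
    have := i.isLt
    have := i'.isLt
    apply Fin.ext
    split_ifs at h1 <;> omega
  have hTinj : Function.Injective T := by
    intro i i' he
    have h1 : vc ((π (K i) : Fin N) : ℕ) = vc ((π (K i') : Fin N) : ℕ) := congrArg Fin.val he
    set y := ((π (K i) : Fin N) : ℕ) with hy
    set y' := ((π (K i') : Fin N) : ℕ) with hy'
    by_cases hby : c ≤ y ∧ y < c + b
    · by_cases hby' : c ≤ y' ∧ y' < c + b
      · have e1 : (i : ℕ) = a := (hKs i).mp ((hmemv (K i)).mpr hby)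
        have e2 : (i' : ℕ) = a := (hKs i').mp ((hmemv (K i')).mpr hby')
        exact Fin.ext (e1.trans e2.symm)
      · exfalso
        simp only [hvc] at h1
        split_ifs at h1 <;> omega
    · by_cases hby' : c ≤ y' ∧ y' < c + b
      · exfalso
        simp only [hvc] at h1
        split_ifs at h1 <;> omega
      · have hyy : y = y' := by
          simp only [hvc] at h1
          have := (π (K i)).isLt
          have := (π (K i')).isLt
          split_ifs at h1 <;> omega
        exact hKinj (π.injective (Fin.ext hyy))
  set θ : PermOf m := Equiv.ofBijective T (Finite.injective_iff_bijective.mp hTinj) with hθdef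
  have hθ : ∀ i, ((θ i : Fin m) : ℕ) = vc ((π (K i) : Fin N) : ℕ) := fun i => rfl
  have hKva : Kv aIdx = a := by simp [hKv, haIdx]
  have hθa : θ aIdx = cIdx := by
    apply Fin.ext
    rw [hθ]
    have hblk := (hmemv (K aIdx)).mp (by rw [hK]; simp only; rw [hKva]; omega)
    simp only [hvc, hcIdx]
    split_ifs <;> omega
  set n : Fin m → ℕ := fun i => if i = aIdx then b else 1 with hn
  have hn1 : ∀ i, 0 < n i := by
    intro i; simp only [hn]; split_ifs <;> omega
  have hnN : ∀ i, n i < N := by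
    intro i; simp only [hn]; split_ifs <;> omega
  have hsum : ∑ i, n i = N := by
    rw [hn, sum_n_ite aIdx b (by omega)]
    omega
  have haj : ∀ j : Fin b, a + (j : ℕ) < N := fun j => by
    have := j.isLt; omega
  set Bf : Fin b → Fin b := fun j =>
    ⟨((π ⟨a + (j : ℕ), haj j⟩ : Fin N) : ℕ) - c, by
      have hblk := (hmemv ⟨a + (j : ℕ), haj j⟩).mp (by simp only; have := j.isLt; omega)
      omega⟩ with hBf
  have hBfinj : Function.Injective Bf := by
    intro j j' he
    have h1 := congrArg Fin.val he
    simp only [hBf] at h1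
    have hblk := (hmemv ⟨a + (j : ℕ), haj j⟩).mp (by simp only; have := j.isLt; omega)
    have hblk' := (hmemv ⟨a + (j' : ℕ), haj j'⟩).mp (by simp only; have := j'.isLt; omega)
    have h2 : ((π ⟨a + (j : ℕ), haj j⟩ : Fin N) : ℕ) = ((π ⟨a + (j' : ℕ), haj j'⟩ : Fin N) : ℕ) := by
      omega
    have h3 := π.injective (Fin.ext h2)
    have h4 : a + (j : ℕ) = a + (j' : ℕ) := congrArg Fin.val h3
    exact Fin.ext (by omega)
  set β : PermOf b := Equiv.ofBijective Bf (Finite.injective_iff_bijective.mp hBfinj) with hβdef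
  have hβ : ∀ j : Fin b, ((β j : Fin b) : ℕ) = ((π ⟨a + (j : ℕ), haj j⟩ : Fin N) : ℕ) - c :=
    fun j => rfl
  have hnaIdx : n aIdx = b := by simp [hn]
  set γ : ∀ i, PermOf (n i) := fun i =>
    if h : i = aIdx then (finCongr (show b = n i by rw [h, hnaIdx])).permCongr β
    else (finCongr (show 1 = n i by simp [hn, h])).permCongr (Equiv.refl (Fin 1)) with hγ
  have hγa_val : ∀ (j : Fin (n aIdx)) (hj : a + (j : ℕ) < N),
      ((γ aIdx j : Fin (n aIdx)) : ℕ) = ((π ⟨a + (j : ℕ), hj⟩ : Fin N) : ℕ) - c := by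
    intro j hj
    simp only [hγ, dif_pos rfl, Equiv.permCongr_apply, finCongr_apply, Fin.coe_cast,
      Fin.cast_mk, Equiv.symm_symm]
    rw [hβ]
    rfl
  have hγo_val : ∀ i, i ≠ aIdx → ∀ j : Fin (n i), ((γ i j : Fin (n i)) : ℕ) = 0 := by
    intro i hi j
    have h1 : n i = 1 := by simp [hn, hi]
    have := (γ i j).isLt
    omega
  -- pattern containment of skeleton
  have hKmono : StrictMono K := by
    intro i i' hii
    rw [Fin.lt_def]
    show Kv i < Kv i'
    have h3 : (i : ℕ) < (i' : ℕ) := hii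
    simp only [hKv]
    split_ifs <;> omega
  have hθpatt : PattContains θ π := by
    refine ⟨OrderEmbedding.ofStrictMono K hKmono, fun i i' => ?_⟩
    rcases eq_or_ne i i' with rfl | hne
    · simp
    · show θ i < θ i' ↔ π (K i) < π (K i')
      rw [Fin.lt_def, Fin.lt_def, hθ, hθ]
      set y := ((π (K i) : Fin N) : ℕ) with hy
      set y' := ((π (K i') : Fin N) : ℕ) with hy'
      have hnb : ¬((c ≤ y ∧ y < c + b) ∧ (c ≤ y' ∧ y' < c + b)) := by
        rintro ⟨h1, h2⟩
        have e1 : (i : ℕ) = a := (hKs i).mp ((hmemv (K i)).mpr h1)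
        have e2 : (i' : ℕ) = a := (hKs i').mp ((hmemv (K i')).mpr h2)
        exact hne (Fin.ext (e1.trans e2.symm))
      have hyy : y ≠ y' := by
        intro h
        exact hne (hKinj (π.injective (Fin.ext h)))
      simp only [hvc]
      split_ifs <;> omega
  have hγpatt : ∀ i, PattContains (γ i) π := by
    intro i
    rcases eq_or_ne i aIdx with rfl | hne
    · have hjlt : ∀ j : Fin (n aIdx), a + (j : ℕ) < N := by
        intro j; have h1 := j.isLt; have h2 := hnaIdx; omega
      refine ⟨OrderEmbedding.ofStrictMono (fun j => (⟨a + (j : ℕ), hjlt j⟩ : Fin N))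
        (fun j j' hjj => by rw [Fin.lt_def]; simp only; have : (j:ℕ) < (j':ℕ) := hjj; omega),
        fun j j' => ?_⟩
      show γ aIdx j < γ aIdx j' ↔ π ⟨a + (j : ℕ), hjlt j⟩ < π ⟨a + (j' : ℕ), hjlt j'⟩
      rw [Fin.lt_def, Fin.lt_def, hγa_val j (hjlt j), hγa_val j' (hjlt j')]
      have hblk := (hmemv ⟨a + (j : ℕ), hjlt j⟩).mp (by
        show a ≤ a + (j : ℕ) ∧ a + (j : ℕ) < a + b
        have h1 := j.isLt; have h2 := hnaIdx; omega)
      have hblk' := (hmemv ⟨a + (j' : ℕ), hjlt j'⟩).mp (by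
        show a ≤ a + (j' : ℕ) ∧ a + (j' : ℕ) < a + b
        have h1 := j'.isLt; have h2 := hnaIdx; omega)
      omega
    · exact pattContains_of_len_one (γ i) (by simp [hn, hne]) π (by omega)
  refine ⟨m, θ, n, γ, hmN, hn1, hnN, hθpatt, hγpatt, perm_sigma_eq hsum _ π ?_⟩
  intro p
  obtain ⟨x, rfl⟩ := sigmaFinEquiv.surjective p
  obtain ⟨i, j⟩ := x
  rw [inflation_val]
  have hw : (fun v => n (θ.symm v)) = (fun v : Fin m => if v = cIdx then b else 1) := by
    funext v
    have hiff : θ.symm v = aIdx ↔ v = cIdx := by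
      rw [Equiv.symm_apply_eq, hθa]
    simp only [hn]
    by_cases hv : v = cIdx
    · rw [if_pos (hiff.mpr hv), if_pos hv]
    · rw [if_neg (fun hh => hv (hiff.mp hh)), if_neg hv]
  rw [hw, ofsF_ite cIdx b (by omega)]
  have hposval : ((sigmaFinEquiv ⟨i, j⟩ : Fin (∑ i, n i)) : ℕ)
      = (if (i : ℕ) ≤ a then (i : ℕ) else (i : ℕ) + b - 1) + (j : ℕ) := by
    rw [sigmaFinEquiv_val]
    congr 1
    exact ofsF_ite aIdx b (by omega) i
  rcases eq_or_ne i aIdx with rfl | hne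
  · have hjb : (j : ℕ) < b := by have h1 := j.isLt; have h2 := hnaIdx; omega
    have hpv : ((sigmaFinEquiv ⟨aIdx, j⟩ : Fin (∑ i, n i)) : ℕ) = a + (j : ℕ) := by
      rw [hposval]; simp [haIdx]
    have hargN : a + (j : ℕ) < N := by omega
    have harg : (⟨((sigmaFinEquiv ⟨aIdx, j⟩ : Fin (∑ i, n i)) : ℕ),
        hsum ▸ (sigmaFinEquiv ⟨aIdx, j⟩).isLt⟩ : Fin N) = ⟨a + (j : ℕ), hargN⟩ :=
      Fin.ext hpv
    rw [harg, hγa_val j hargN]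
    have hθav : ((θ aIdx : Fin m) : ℕ) = c := congrArg Fin.val hθa
    rw [hθav, show ((cIdx : Fin m) : ℕ) = c from rfl]
    have hblk := (hmemv ⟨a + (j : ℕ), hargN⟩).mp (by
      show a ≤ a + (j : ℕ) ∧ a + (j : ℕ) < a + b
      omega)
    have hmkv : ((⟨a + (j : ℕ), hargN⟩ : Fin N) : ℕ) = a + (j : ℕ) := rfl
    rw [if_pos (le_refl c)]
    omega
  · have hia : (i : ℕ) ≠ a := fun h => hne (Fin.ext h)
    have hn1' : n i = 1 := by simp [hn, hne]
    have hj0 : (j : ℕ) = 0 := by have := j.isLt; omega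
    have hpv : ((sigmaFinEquiv ⟨i, j⟩ : Fin (∑ i, n i)) : ℕ) = Kv i := by
      rw [hposval, hj0]
      simp only [hKv]
      omega
    have harg : (⟨((sigmaFinEquiv ⟨i, j⟩ : Fin (∑ i, n i)) : ℕ),
        hsum ▸ (sigmaFinEquiv ⟨i, j⟩).isLt⟩ : Fin N) = K i :=
      Fin.ext hpv
    rw [harg, hγo_val i hne j, hθ, show ((cIdx : Fin m) : ℕ) = c from rfl]
    set y := ((π (K i) : Fin N) : ℕ) with hy
    have hynb : ¬(c ≤ y ∧ y < c + b) := by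
      intro h
      exact hia ((hKs i).mp ((hmemv (K i)).mpr h))
    have hyN : y < N := (π (K i)).isLt
    simp only [hvc]
    split_ifs <;> omega

end LemmaB

section Main

lemma pattContains_of_len_zero {c N : ℕ} (x : PermOf c) (hc : c = 0) (π : PermOf N) :
    PattContains x π := by
  subst hc
  exact ⟨OrderEmbedding.ofStrictMono (fun p => p.elim0) (fun p => p.elim0),
    fun s t => s.elim0⟩

theorem simples_of_substClosure'
    (C : Set Permutation) (hC : IsPermClass C) (hne : ∃ π ∈ C, 0 < π.1) :
    ({π : Permutation | π ∈ substClosure C ∧ IsSimple π.2}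
        = {π : Permutation | π ∈ C ∧ IsSimple π.2}) ∧
    ∀ D : Set Permutation, IsPermClass D →
      (D ⊆ substClosure C ↔ ∀ π ∈ D, IsSimple π.2 → π ∈ C) := by
  obtain ⟨ρ, hρC, hρpos⟩ := hne
  -- the class E of permutations all of whose simple patterns lie in C
  set E : Set Permutation :=
    {π | ∀ τ : Permutation, IsSimple τ.2 → PermLe τ π → τ ∈ C} with hE
  have hEclass : IsPermClass E := by
    intro σ π hle hπ τ hτs hτle
    exact hπ τ hτs (permLe_trans hτle hle)
  have hECsub : C ⊆ E := by
    intro π hπ τ hτs hτle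
    exact hC τ π hτle hπ
  have hEsc : SubstClosed E := by
    rintro π ⟨m, σ, n, α, hσE, hn1, hαE, rfl⟩
    intro τ hτs hτle
    rcases simple_patt_of_inflation τ.2 σ α hτs hτle with ⟨i, hi⟩ | hσi
    · exact hαE i τ hτs hi
    · exact hσE τ hτs hσi
  have hsubE : substClosure C ⊆ E := fun π hπ =>
    hπ E ⟨hEclass, hEsc, hECsub⟩
  have hCsub : C ⊆ substClosure C := by
    intro π hπ
    rw [substClosure, Set.mem_sInter]
    rintro X ⟨-, -, hCX⟩
    exact hCX hπ
  -- key induction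
  have key : ∀ N, ∀ (π : PermOf N),
      (∀ τ : Permutation, IsSimple τ.2 → PermLe τ ⟨N, π⟩ → τ ∈ C) →
      ∀ X : Set Permutation, IsPermClass X → SubstClosed X → C ⊆ X →
        (⟨N, π⟩ : Permutation) ∈ X := by
    intro N
    induction N using Nat.strong_induction_on with
    | _ N IH =>
      intro π hπ X hX hXs hCX
      match N, π, hπ, IH with
      | 0, π, hπ, IH =>
        exact hCX (hC ⟨0, π⟩ ρ (pattContains_of_len_zero π rfl ρ.2) hρC)
      | 1, π, hπ, IH =>
        exact hCX (hC ⟨1, π⟩ ρ (pattContains_of_len_one π rfl ρ.2 hρpos) hρC)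
      | (N + 2), π, hπ, IH =>
        by_cases hsimp : IsSimple π
        · exact hCX (hπ ⟨N + 2, π⟩ hsimp (permLe_refl _))
        · obtain ⟨m, θ, n, γ, hmN, hn1, hnN, hθp, hγp, heq⟩ :=
            decomp_of_not_simple π (by omega) hsimp
          rw [heq]
          apply hXs
          refine ⟨m, θ, n, γ, ?_, hn1, ?_, rfl⟩
          · exact IH m hmN θ
              (fun τ hτs hτle => hπ τ hτs (permLe_trans hτle hθp)) X hX hXs hCX
          · intro i
            exact IH (n i) (hnN i) (γ i)
              (fun τ hτs hτle => hπ τ hτs (permLe_trans hτle (hγp i))) X hX hXs hCX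
  constructor
  · ext π
    simp only [Set.mem_setOf_eq]
    constructor
    · rintro ⟨hmem, hsimp⟩
      exact ⟨hsubE hmem π hsimp (permLe_refl π), hsimp⟩
    · rintro ⟨hmem, hsimp⟩
      exact ⟨hCsub hmem, hsimp⟩
  · intro D hD
    constructor
    · intro hsub π hπD hsimp
      exact hsubE (hsub hπD) π hsimp (permLe_refl π)
    · intro hall π hπD
      rw [substClosure, Set.mem_sInter]
      rintro X ⟨hX1, hX2, hX3⟩
      exact key π.1 π.2
        (fun τ hτs hτle => hall τ (hD τ π hτle hπD) hτs) X hX1 hX2 hX3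

end Main


/-- The substitution closure of a nonempty class `C` contains exactly the same
simple permutations as `C`, and a class `D` is contained in the substitution closure of `C` if
and only if every simple permutation of `D` belongs to `C`. -/
theorem simples_of_substClosure
    (C : Set Permutation) (hC : IsPermClass C) (hne : ∃ π ∈ C, 0 < π.1) :
    ({π : Permutation | π ∈ substClosure C ∧ IsSimple π.2}
        = {π : Permutation | π ∈ C ∧ IsSimple π.2}) ∧
    ∀ D : Set Permutation, IsPermClass D →
      (D ⊆ substClosure C ↔ ∀ π ∈ D, IsSimple π.2 → π ∈ C) := by
  exact simples_of_substClosure' C hC hne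
end

section
/- For every nonempty permutation class C, the basis of the substitution closure ⟨C⟩ consists precisely of the containment-minimal simple permutations not belonging to C. -/
open scoped BigOperators

/-! A permutation lies in `⟨C⟩` exactly when all of its simple patterns lie in `C`. These
permutations form a substitution closed class containing `C`, because a simple pattern of an
inflation `σ[α₁, …, α_m]` is a pattern of `σ` or of some `αᵢ`: its entries falling into a common
block form an interval. Conversely a permutation that is not simple is the inflation of a shorter
skeleton by shorter blocks (collapse a proper interval of length at least two to a point), so
induction on the length puts it into `⟨C⟩`. The basis of the class of permutations whose simple
patterns lie in `C` is then read off directly. -/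

section Containment

theorem PattContains.refl {a : ℕ} (x : PermOf a) : PattContains x x :=
  ⟨RelEmbedding.refl _, fun _ _ => Iff.rfl⟩

theorem PattContains.trans {a b c : ℕ} {x : PermOf a} {y : PermOf b} {z : PermOf c}
    (h₁ : PattContains x y) (h₂ : PattContains y z) : PattContains x z := by
  obtain ⟨f, hf⟩ := h₁
  obtain ⟨g, hg⟩ := h₂
  exact ⟨f.trans g, fun s t => (hf s t).trans (hg (f s) (f t))⟩

theorem PattContains.length_le {a b : ℕ} {x : PermOf a} {y : PermOf b} (h : PattContains x y) :
    a ≤ b := by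
  simpa using Fintype.card_le_of_embedding h.choose.toEmbedding

theorem PattContains.eq {a : ℕ} {x y : PermOf a} (h : PattContains x y) : x = y := by
  obtain ⟨f, hf⟩ := h
  have hmono : StrictMono fun i => y (x.symm i) := fun i j hij => by
    simpa [f.strictMono.apply_eq] using (hf (x.symm i) (x.symm j)).1 (by simpa using hij)
  ext i
  simpa using congrArg Fin.val (hmono.apply_eq (x := x i)).symm

theorem PermLe.refl (x : Permutation) : PermLe x x := PattContains.refl x.2

theorem PermLe.trans {x y z : Permutation} (h₁ : PermLe x y) (h₂ : PermLe y z) : PermLe x z :=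
  PattContains.trans h₁ h₂

theorem PermLe.length_le {x y : Permutation} (h : PermLe x y) : x.1 ≤ y.1 :=
  PattContains.length_le h

theorem PermLe.eq_of_length_le {x y : Permutation} (h : PermLe x y) (hl : y.1 ≤ x.1) : x = y := by
  obtain ⟨a, x⟩ := x
  obtain ⟨b, y⟩ := y
  obtain rfl : a = b := le_antisymm h.length_le hl
  exact congrArg _ (PattContains.eq h)

theorem PermLe.antisymm {x y : Permutation} (h₁ : PermLe x y) (h₂ : PermLe y x) : x = y :=
  h₁.eq_of_length_le h₂.length_le

theorem PermLe.of_length_le_one {x y : Permutation} (hx : x.1 ≤ 1) (hxy : x.1 ≤ y.1) :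
    PermLe x y := by
  have : Subsingleton (Fin x.1) := Fin.subsingleton_iff_le_one.2 hx
  refine ⟨Fin.castLEOrderEmb hxy, fun s t => ?_⟩
  obtain rfl := Subsingleton.elim s t
  simp

end Containment

section Inflation

theorem val_sigmaFinEquiv : ∀ {m : ℕ} {n : Fin m → ℕ} (x : Σ i : Fin m, Fin (n i)),
    ((sigmaFinEquiv x : Fin (∑ i, n i)) : ℕ) = ∑ v ∈ Finset.univ.filter (· < x.1), n v + x.2
  | 0, _, x => x.1.elim0
  | m + 1, n, ⟨i, j⟩ => by
    have hunfold : ∀ x : Σ i : Fin (m + 1), Fin (n i),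
        sigmaFinEquiv (n := n) x = finCongr (Fin.sum_univ_succ n).symm
          (finSumFinEquiv (((Equiv.refl (Fin (n 0))).sumCongr sigmaFinEquiv)
            ((sigmaFinFstEquiv fun i => Fin (n i)) x))) := fun _ => rfl
    rw [hunfold]
    induction i using Fin.cases with
    | zero => simp [sigmaFinFstEquiv]
    | succ i =>
      have hsum : ∑ v ∈ Finset.univ.filter (· < i.succ), n v
          = n 0 + ∑ v ∈ Finset.univ.filter (· < i), n v.succ := by
        rw [Finset.sum_filter, Finset.sum_filter, Fin.sum_univ_succ]
        simp [Fin.succ_lt_succ_iff, Fin.succ_pos]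
      simp only [sigmaFinFstEquiv, Fin.cases_succ, Equiv.coe_fn_mk, Equiv.sumCongr_apply,
        Sum.map_inr, finCongr_apply, Fin.val_cast, finSumFinEquiv_apply_right, Fin.natAdd]
      rw [val_sigmaFinEquiv (n := fun v : Fin m => n v.succ) ⟨i, j⟩, hsum]
      simp only
      omega

theorem sum_filter_lt_add_le_sum_filter_lt {m : ℕ} (n : Fin m → ℕ) {i i' : Fin m} (h : i < i') :
    ∑ v ∈ Finset.univ.filter (· < i), n v + n i ≤ ∑ v ∈ Finset.univ.filter (· < i'), n v := by
  have hsub : insert i (Finset.univ.filter (· < i)) ⊆ Finset.univ.filter (· < i') := by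
    intro v hv
    simp only [Finset.mem_insert, Finset.mem_filter, Finset.mem_univ, true_and] at hv ⊢
    rcases hv with rfl | hv
    exacts [h, hv.trans h]
  have hle := Finset.sum_le_sum_of_subset (f := n) hsub
  rwa [Finset.sum_insert (by simp), add_comm] at hle

theorem sum_filter_lt_add_lt_iff {m : ℕ} (n : Fin m → ℕ) {i i' : Fin m} {j j' : ℕ}
    (hj : j < n i) (hj' : j' < n i') :
    ∑ v ∈ Finset.univ.filter (· < i), n v + j < ∑ v ∈ Finset.univ.filter (· < i'), n v + j'
      ↔ i < i' ∨ (i = i' ∧ j < j') := by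
  rcases lt_trichotomy i i' with h | rfl | h
  · have := sum_filter_lt_add_le_sum_filter_lt n h
    simp only [h, true_or, iff_true]
    omega
  · simp
  · have := sum_filter_lt_add_le_sum_filter_lt n h
    simp only [h.not_gt, h.ne', false_and, or_self, iff_false]
    omega

theorem sigmaFinEquiv_lt_iff {m : ℕ} {n : Fin m → ℕ} {x y : Σ i : Fin m, Fin (n i)} :
    (sigmaFinEquiv x : Fin (∑ i, n i)) < sigmaFinEquiv y
      ↔ x.1 < y.1 ∨ (x.1 = y.1 ∧ (x.2 : ℕ) < y.2) := by
  rw [Fin.lt_def, val_sigmaFinEquiv, val_sigmaFinEquiv]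
  exact sum_filter_lt_add_lt_iff n x.2.isLt y.2.isLt

theorem val_inflation_sigmaFinEquiv {m : ℕ} (σ : PermOf m) {n : Fin m → ℕ}
    (α : ∀ i, PermOf (n i)) (x : Σ i : Fin m, Fin (n i)) :
    ((inflation σ α (sigmaFinEquiv x) : Fin (∑ i, n i)) : ℕ)
      = ∑ v ∈ Finset.univ.filter (· < σ x.1), n (σ.symm v) + (α x.1 x.2 : ℕ) := by
  obtain ⟨i, j⟩ := x
  simp only [inflation, Equiv.trans_apply, Equiv.symm_apply_apply]
  rw [show (Equiv.sigmaCongrRight fun i =>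
        (α i).trans (finCongr (congrArg n (σ.symm_apply_apply i).symm))) ⟨i, j⟩
      = ⟨i, finCongr (congrArg n (σ.symm_apply_apply i).symm) (α i j)⟩ from rfl,
    show Equiv.sigmaCongrLeft (β := fun v : Fin m => Fin (n (σ.symm v))) σ
        ⟨i, finCongr (congrArg n (σ.symm_apply_apply i).symm) (α i j)⟩
      = ⟨σ i, finCongr (congrArg n (σ.symm_apply_apply i).symm) (α i j)⟩ from rfl,
    finCongr_apply, Fin.val_cast, val_sigmaFinEquiv]
  simp

theorem inflation_lt_iff {m : ℕ} (σ : PermOf m) {n : Fin m → ℕ} (α : ∀ i, PermOf (n i))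
    {x y : Σ i : Fin m, Fin (n i)} :
    inflation σ α (sigmaFinEquiv x) < inflation σ α (sigmaFinEquiv y)
      ↔ σ x.1 < σ y.1 ∨ (x.1 = y.1 ∧ (α x.1 x.2 : ℕ) < α y.1 y.2) := by
  rw [Fin.lt_def, val_inflation_sigmaFinEquiv, val_inflation_sigmaFinEquiv,
    sum_filter_lt_add_lt_iff (fun v => n (σ.symm v))
      (by simp) (by simp),
    σ.injective.eq_iff]

theorem pattContains_inflation_skeleton {m : ℕ} (σ : PermOf m) {n : Fin m → ℕ}
    (α : ∀ i, PermOf (n i)) (hn : ∀ i, 0 < n i) : PattContains σ (inflation σ α) := by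
  have hmono : StrictMono fun i => (sigmaFinEquiv ⟨i, ⟨0, hn i⟩⟩ : Fin (∑ i, n i)) :=
    fun _ _ h => sigmaFinEquiv_lt_iff.2 (Or.inl h)
  refine ⟨OrderEmbedding.ofStrictMono _ hmono, fun i i' => .trans ?_ (inflation_lt_iff σ α).symm⟩
  refine ⟨Or.inl, ?_⟩
  rintro (h | ⟨rfl, h⟩)
  exacts [h, (lt_irrefl _ h).elim]

theorem pattContains_inflation_block {m : ℕ} (σ : PermOf m) {n : Fin m → ℕ}
    (α : ∀ i, PermOf (n i)) (i : Fin m) : PattContains (α i) (inflation σ α) := by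
  have hmono : StrictMono fun j => (sigmaFinEquiv ⟨i, j⟩ : Fin (∑ i, n i)) :=
    fun _ _ h => sigmaFinEquiv_lt_iff.2 (Or.inr ⟨rfl, h⟩)
  refine ⟨OrderEmbedding.ofStrictMono _ hmono, fun j j' => .trans ?_ (inflation_lt_iff σ α).symm⟩
  simp only [lt_irrefl, true_and, false_or]
  exact Fin.lt_def

theorem pattContains_inflation_of_lex {m N : ℕ} {σ : PermOf m} {n : Fin m → ℕ}
    {α : ∀ i, PermOf (n i)} {π : PermOf N} (g : (Σ i : Fin m, Fin (n i)) → Fin N)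
    (hg : ∀ x y, x.1 < y.1 ∨ (x.1 = y.1 ∧ (x.2 : ℕ) < y.2) → g x < g y)
    (hπ : ∀ x y, π (g x) < π (g y) ↔ σ x.1 < σ y.1 ∨ (x.1 = y.1 ∧ (α x.1 x.2 : ℕ) < α y.1 y.2)) :
    PattContains (inflation σ α) π := by
  have hmono : StrictMono (g ∘ sigmaFinEquiv.symm) := fun p q h => by
    obtain ⟨x, rfl⟩ := sigmaFinEquiv.surjective p
    obtain ⟨y, rfl⟩ := sigmaFinEquiv.surjective q
    simpa using hg x y (sigmaFinEquiv_lt_iff.1 h)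
  refine ⟨OrderEmbedding.ofStrictMono _ hmono, fun p q => ?_⟩
  obtain ⟨x, rfl⟩ := sigmaFinEquiv.surjective p
  obtain ⟨y, rfl⟩ := sigmaFinEquiv.surjective q
  rw [inflation_lt_iff, ← hπ]
  simp

end Inflation

section SimplePatterns

/-! Throughout, `z s = ⟨i, j⟩` says that the entry `s` of `τ` is sent to the `j`-th entry of the
`i`-th block of `σ[α]`; `hpos` and `hval` say that this is an embedding of `τ` as a pattern. -/

variable {l m : ℕ} {τ : PermOf l} {σ : PermOf m} {n : Fin m → ℕ} {α : ∀ i, PermOf (n i)}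
  {z : Fin l → Σ i : Fin m, Fin (n i)}

theorem monotone_fst_of_lex
    (hpos : ∀ s t, s < t → (z s).1 < (z t).1 ∨ ((z s).1 = (z t).1 ∧ ((z s).2 : ℕ) < (z t).2)) :
    Monotone fun s => (z s).1 := by
  intro s t hst
  rcases hst.eq_or_lt with rfl | hlt
  · exact le_rfl
  rcases hpos s t hlt with h | ⟨h, -⟩
  exacts [h.le, h.le]

theorem pattContains_of_injective_fst
    (hpos : ∀ s t, s < t → (z s).1 < (z t).1 ∨ ((z s).1 = (z t).1 ∧ ((z s).2 : ℕ) < (z t).2))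
    (hval : ∀ s t, τ s < τ t ↔
      σ (z s).1 < σ (z t).1 ∨ ((z s).1 = (z t).1 ∧ (α _ (z s).2 : ℕ) < α _ (z t).2))
    (hinj : Function.Injective fun s => (z s).1) : PattContains τ σ := by
  refine ⟨OrderEmbedding.ofStrictMono _ ((monotone_fst_of_lex hpos).strictMono_of_injective hinj),
    fun s t => (hval s t).trans ⟨?_, Or.inl⟩⟩
  rintro (h | ⟨h, hlt⟩)
  · exact h
  · obtain rfl := hinj h
    exact (lt_irrefl _ hlt).elim

theorem pattContains_of_fst_eq
    (hpos : ∀ s t, s < t → (z s).1 < (z t).1 ∨ ((z s).1 = (z t).1 ∧ ((z s).2 : ℕ) < (z t).2))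
    (hval : ∀ s t, τ s < τ t ↔
      σ (z s).1 < σ (z t).1 ∨ ((z s).1 = (z t).1 ∧ (α _ (z s).2 : ℕ) < α _ (z t).2))
    {i : Fin m} (hi : ∀ s, (z s).1 = i) : PattContains τ (α i) := by
  obtain ⟨w, hw⟩ : ∃ w : Fin l → Fin (n i), ∀ s, z s = ⟨i, w s⟩ := by
    refine ⟨fun s => Fin.cast (congrArg n (hi s)) (z s).2, fun s => ?_⟩
    exact Sigma.ext (hi s) ((Fin.heq_ext_iff (congrArg n (hi s))).2 rfl)
  obtain rfl : z = fun s => ⟨i, w s⟩ := funext hw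
  simp only [lt_irrefl, true_and, false_or] at hpos hval
  exact ⟨OrderEmbedding.ofStrictMono w fun s t h => Fin.lt_def.2 (hpos s t h),
    fun s t => (hval s t).trans Fin.lt_def.symm⟩

theorem isPermInterval_fst_fiber
    (hpos : ∀ s t, s < t → (z s).1 < (z t).1 ∨ ((z s).1 = (z t).1 ∧ ((z s).2 : ℕ) < (z t).2))
    (hval : ∀ s t, τ s < τ t ↔
      σ (z s).1 < σ (z t).1 ∨ ((z s).1 = (z t).1 ∧ (α _ (z s).2 : ℕ) < α _ (z t).2))
    (i : Fin m) : IsPermInterval τ {s | (z s).1 = i} := by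
  have hσ : ∀ s t, τ s ≤ τ t → σ (z s).1 ≤ σ (z t).1 := by
    intro s t hst
    rcases hst.eq_or_lt with h | hlt
    · rw [τ.injective h]
    rcases (hval s t).1 hlt with h | ⟨h, -⟩
    exacts [h.le, h ▸ le_rfl]
  refine ⟨fun s hs t ht u hsu hut => ?_, ?_⟩
  · change (z s).1 = i at hs
    change (z t).1 = i at ht
    exact le_antisymm (ht ▸ monotone_fst_of_lex hpos hut) (hs ▸ monotone_fst_of_lex hpos hsu)
  · rintro _ ⟨s, hs, rfl⟩ _ ⟨t, ht, rfl⟩ v hsv hvt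
    change (z s).1 = i at hs
    change (z t).1 = i at ht
    refine ⟨τ.symm v, σ.injective (le_antisymm ?_ ?_), τ.apply_symm_apply v⟩
    · simpa [ht] using hσ (τ.symm v) t (by simpa using hvt)
    · simpa [hs] using hσ s (τ.symm v) (by simpa using hsv)

/-- The blocks of an inflation are intervals, so a simple pattern meets at most one point of
each block, or lies inside a single block. -/
theorem IsSimple.pattContains_or_of_pattContains_inflation (hτ : IsSimple τ)
    (h : PattContains τ (inflation σ α)) : PattContains τ σ ∨ ∃ i, PattContains τ (α i) := by
  obtain ⟨f, hf⟩ := h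
  set z := fun s => sigmaFinEquiv.symm (f s)
  have hfz : ∀ s, f s = sigmaFinEquiv (z s) := fun s => (Equiv.apply_symm_apply _ _).symm
  have hpos : ∀ s t, s < t → (z s).1 < (z t).1 ∨ ((z s).1 = (z t).1 ∧ ((z s).2 : ℕ) < (z t).2) :=
    fun s t hst => sigmaFinEquiv_lt_iff.1 (by simpa only [← hfz] using f.strictMono hst)
  have hval : ∀ s t, τ s < τ t ↔
      σ (z s).1 < σ (z t).1 ∨ ((z s).1 = (z t).1 ∧ (α _ (z s).2 : ℕ) < α _ (z t).2) :=
    fun s t => by rw [hf, hfz, hfz, inflation_lt_iff]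
  by_cases hinj : Function.Injective fun s => (z s).1
  · exact .inl (pattContains_of_injective_fst hpos hval hinj)
  obtain ⟨s₀, t₀, hst₀, hne⟩ := Function.not_injective_iff.1 hinj
  have hfiber := (hτ.2 _ (isPermInterval_fst_fiber hpos hval (z s₀).1)).resolve_left fun h =>
    hne ((Set.ncard_le_one (Set.toFinite _)).1 h s₀ rfl t₀ hst₀.symm)
  exact .inr ⟨_, pattContains_of_fst_eq hpos hval fun s => hfiber.symm ▸ Set.mem_univ s⟩

end SimplePatterns

section Decomposition

theorem exists_perm_lt_iff {m : ℕ} {β : Type*} [LinearOrder β] {v : Fin m → β}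
    (hv : Function.Injective v) : ∃ ρ : PermOf m, ∀ p q, ρ p < ρ q ↔ v p < v q := by
  refine ⟨(Tuple.sort v).symm, fun p q => ?_⟩
  obtain ⟨a, rfl⟩ := (Tuple.sort v).surjective p
  obtain ⟨b, rfl⟩ := (Tuple.sort v).surjective q
  simpa using ((Tuple.monotone_sort v).strictMono_of_injective
    (hv.comp (Tuple.sort v).injective)).lt_iff_lt.symm

theorem IsIntervalSet.exists_eq_Icc {N : ℕ} {s : Set (Fin N)} (hs : IsIntervalSet s)
    (hne : s.Nonempty) : ∃ a c, s = Set.Icc a c := by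
  classical
  have hF : s.toFinset.Nonempty := Set.toFinset_nonempty.2 hne
  refine ⟨s.toFinset.min' hF, s.toFinset.max' hF, subset_antisymm
    (fun p hp => ⟨s.toFinset.min'_le p (by simpa), s.toFinset.le_max' p (by simpa)⟩)
    fun p hp => hs ?_ ?_ hp.1 hp.2⟩
  · simpa using s.toFinset.min'_mem hF
  · simpa using s.toFinset.max'_mem hF

theorem IsIntervalSet.exists_mem_iff {N : ℕ} {s : Set (Fin N)} (hs : IsIntervalSet s)
    (hne : s.Nonempty) :
    ∃ A, A + s.ncard ≤ N ∧ ∀ p : Fin N, p ∈ s ↔ A ≤ (p : ℕ) ∧ (p : ℕ) < A + s.ncard := by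
  obtain ⟨a, c, rfl⟩ := hs.exists_eq_Icc hne
  have hac : a ≤ c := Set.nonempty_Icc.1 hne
  have hcard : (Set.Icc a c).ncard = c + 1 - a := by
    rw [← Finset.coe_Icc, Set.ncard_coe_finset, Fin.card_Icc]
  refine ⟨a, by have := c.isLt; omega, fun p => ?_⟩
  rw [hcard, Set.mem_Icc, Fin.le_def, Fin.le_def]
  omega

/-- Collapsing the block `[A, A + k)` of positions to the single index `A`: the `q`-th index of
the result stands for `collapsedLen A k q` positions, the first of which is
`collapsedStart A k q`. -/
def collapsedLen (A k q : ℕ) : ℕ := if q = A then k else 1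

def collapsedStart (A k q : ℕ) : ℕ := if q ≤ A then q else q + (k - 1)

theorem collapsedLen_pos_le {A k : ℕ} (hk : 1 ≤ k) (q : ℕ) :
    0 < collapsedLen A k q ∧ collapsedLen A k q ≤ k := by
  unfold collapsedLen
  split_ifs <;> omega

theorem collapsedLen_of_ne {A k q : ℕ} (hq : q ≠ A) : collapsedLen A k q = 1 := if_neg hq

theorem collapsedStart_add_lt {A k N q j : ℕ} (hk : 1 ≤ k) (hA : A + k ≤ N) (hq : q < N + 1 - k)
    (hj : j < collapsedLen A k q) : collapsedStart A k q + j < N := by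
  unfold collapsedLen collapsedStart at *
  split_ifs at * <;> omega

theorem collapsedStart_add_lt_collapsedStart_add {A k q q' j j' : ℕ}
    (hj : j < collapsedLen A k q) (h : q < q' ∨ (q = q' ∧ j < j')) :
    collapsedStart A k q + j < collapsedStart A k q' + j' := by
  unfold collapsedLen collapsedStart at *
  split_ifs at * <;> omega

theorem collapsedStart_add_mem_iff {A k q j : ℕ} (hj : j < collapsedLen A k q) :
    A ≤ collapsedStart A k q + j ∧ collapsedStart A k q + j < A + k ↔ q = A := by
  unfold collapsedLen collapsedStart at *
  split_ifs at * <;> omega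

theorem sum_collapsedLen {A k N : ℕ} (hk : 1 ≤ k) (hA : A + k ≤ N) :
    ∑ q : Fin (N + 1 - k), collapsedLen A k q = N := by
  have hA' : A < N + 1 - k := by omega
  have hlen : ∀ q : Fin (N + 1 - k), collapsedLen A k q = 1 + if q = ⟨A, hA'⟩ then k - 1 else 0 :=
    fun q => by simp only [collapsedLen, Fin.ext_iff]; split_ifs <;> omega
  rw [Finset.sum_congr rfl fun q _ => hlen q, Finset.sum_add_distrib]
  simp only [Finset.sum_const, Finset.card_univ, Fintype.card_fin, smul_eq_mul, mul_one,
    Finset.sum_ite_eq', Finset.mem_univ, if_true]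
  omega

theorem exists_eq_inflation_of_block {N : ℕ} (π : PermOf N) {A B k : ℕ} (hk : 1 ≤ k)
    (hA : A + k ≤ N)
    (hblock : ∀ p : Fin N, A ≤ (p : ℕ) ∧ (p : ℕ) < A + k ↔ B ≤ (π p : ℕ) ∧ (π p : ℕ) < B + k) :
    ∃ (σ : PermOf (N + 1 - k)) (n : Fin (N + 1 - k) → ℕ) (α : ∀ i, PermOf (n i)),
      (∀ i, 0 < n i ∧ n i ≤ k) ∧ (⟨N, π⟩ : Permutation) = ⟨∑ i, n i, inflation σ α⟩ := by
  let n : Fin (N + 1 - k) → ℕ := fun q => collapsedLen A k q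
  have hn : ∀ q, 0 < n q ∧ n q ≤ k := fun q => collapsedLen_pos_le hk q
  let g : (Σ q, Fin (n q)) → Fin N := fun x =>
    ⟨collapsedStart A k x.1 + x.2, collapsedStart_add_lt hk hA x.1.isLt x.2.isLt⟩
  have hg : ∀ x y, x.1 < y.1 ∨ (x.1 = y.1 ∧ (x.2 : ℕ) < y.2) → g x < g y := fun x y h =>
    collapsedStart_add_lt_collapsedStart_add x.2.isLt (by rwa [Fin.lt_def, Fin.ext_iff] at h)
  have hmem : ∀ x, A ≤ (g x : ℕ) ∧ (g x : ℕ) < A + k ↔ (x.1 : ℕ) = A := fun x =>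
    collapsedStart_add_mem_iff x.2.isLt
  have hzero : ∀ q (j : Fin (n q)), (q : ℕ) ≠ A → j = ⟨0, (hn q).1⟩ := fun q j hq =>
    Fin.ext (Nat.lt_one_iff.1 (by simpa [n, collapsedLen_of_ne hq] using j.isLt))
  obtain ⟨σ, hσ⟩ := exists_perm_lt_iff (v := fun q => π (g ⟨q, ⟨0, (hn q).1⟩⟩))
    (π.injective.comp (StrictMono.injective fun _ _ h => hg _ _ (.inl h)))
  choose α hα using fun q => exists_perm_lt_iff (v := fun j : Fin (n q) => π (g ⟨q, j⟩))
    (π.injective.comp (StrictMono.injective fun _ _ h => hg _ _ (.inr ⟨rfl, h⟩)))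
  have hval : ∀ x y, π (g x) < π (g y)
      ↔ σ x.1 < σ y.1 ∨ (x.1 = y.1 ∧ (α x.1 x.2 : ℕ) < α y.1 y.2) := by
    rintro ⟨q, j⟩ ⟨q', j'⟩
    by_cases hq : q = q'
    · subst hq
      simp only [lt_irrefl, true_and, false_or, ← Fin.lt_def, hα]
    simp only [hq, false_and, or_false, hσ]
    have h₁ := hblock (g ⟨q, j⟩)
    have h₂ := hblock (g ⟨q, ⟨0, (hn q).1⟩⟩)
    have h₃ := hblock (g ⟨q', j'⟩)
    have h₄ := hblock (g ⟨q', ⟨0, (hn q').1⟩⟩)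
    rw [hmem] at h₁ h₂ h₃ h₄
    dsimp only at h₁ h₂ h₃ h₄
    have hqq' : (q : ℕ) ≠ q' := Fin.val_ne_of_ne hq
    rw [Fin.lt_def, Fin.lt_def]
    -- the values of block `A` form an interval, so they all compare alike with any other value
    rcases eq_or_ne (q : ℕ) A with hqA | hqA
    · obtain rfl := hzero q' j' (by omega)
      omega
    obtain rfl := hzero q j hqA
    rcases eq_or_ne (q' : ℕ) A with hqA' | hqA'
    · omega
    · obtain rfl := hzero q' j' hqA'
      rfl
  exact ⟨σ, n, α, hn,
    (PermLe.eq_of_length_le (x := ⟨_, inflation σ α⟩) (y := ⟨N, π⟩)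
      (pattContains_inflation_of_lex g hg hval) (sum_collapsedLen hk hA).ge).symm⟩

theorem exists_eq_inflation_of_not_isSimple {N : ℕ} {π : PermOf N} (hN : 2 ≤ N)
    (hπ : ¬ IsSimple π) :
    ∃ (m : ℕ) (σ : PermOf m) (n : Fin m → ℕ) (α : ∀ i, PermOf (n i)),
      m < N ∧ (∀ i, 0 < n i ∧ n i < N) ∧ (⟨N, π⟩ : Permutation) = ⟨∑ i, n i, inflation σ α⟩ := by
  obtain ⟨s, hs, hs2, hsN⟩ : ∃ s, IsPermInterval π s ∧ 1 < s.ncard ∧ s ≠ Set.univ := by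
    simp only [IsSimple, hN, true_and, not_forall, not_or, not_le, exists_prop] at hπ
    exact hπ
  have hne : s.Nonempty := Set.nonempty_of_ncard_ne_zero (by omega)
  have hsN : s.ncard < N := by
    simpa using Set.ncard_lt_ncard (Set.ssubset_univ_iff.2 hsN) Set.finite_univ
  obtain ⟨A, hA, hmemA⟩ := hs.1.exists_mem_iff hne
  obtain ⟨B, -, hmemB⟩ := hs.2.exists_mem_iff (hne.image π)
  rw [Set.ncard_image_of_injective s π.injective] at hmemB
  obtain ⟨σ, n, α, hn, heq⟩ := exists_eq_inflation_of_block π (by omega) hA fun p => by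
    rw [← hmemA, ← hmemB, π.injective.mem_set_image]
  exact ⟨_, σ, n, α, by omega, fun i => ⟨(hn i).1, by have := (hn i).2; omega⟩, heq⟩

end Decomposition

section SubstitutionClosure

def simplePatternClosure (C : Set Permutation) : Set Permutation :=
  {x | ∀ t : Permutation, IsSimple t.2 → PermLe t x → t ∈ C}

theorem isPermClass_simplePatternClosure (C : Set Permutation) :
    IsPermClass (simplePatternClosure C) :=
  fun _ _ hxy hy t ht htx => hy t ht (htx.trans hxy)

theorem substClosed_simplePatternClosure (C : Set Permutation) :
    SubstClosed (simplePatternClosure C) := by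
  rintro _ ⟨m, σ, n, α, hσ, -, hα, rfl⟩ t ht htx
  rcases ht.pattContains_or_of_pattContains_inflation htx with h | ⟨i, h⟩
  exacts [hσ t ht h, hα i t ht h]

theorem subset_simplePatternClosure {C : Set Permutation} (hC : IsPermClass C) :
    C ⊆ simplePatternClosure C :=
  fun x hx t _ htx => hC t x htx hx

theorem subset_substClosure (C : Set Permutation) : C ⊆ substClosure C :=
  fun _ hx => Set.mem_sInter.2 fun _ hD => hD.2.2 hx

theorem substClosed_substClosure (C : Set Permutation) : SubstClosed (substClosure C) := by
  rintro x ⟨m, σ, n, α, hσ, hn, hα, rfl⟩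
  exact Set.mem_sInter.2 fun D hD => hD.2.1
    ⟨m, σ, n, α, Set.mem_sInter.1 hσ D hD, hn, fun i => Set.mem_sInter.1 (hα i) D hD, rfl⟩

theorem substClosure_subset {C D : Set Permutation} (hD : IsPermClass D) (hDs : SubstClosed D)
    (hCD : C ⊆ D) : substClosure C ⊆ D :=
  fun _ hx => Set.mem_sInter.1 hx D ⟨hD, hDs, hCD⟩

theorem simplePatternClosure_subset_substClosure {C : Set Permutation} (hC : IsPermClass C)
    (hne : ∃ π ∈ C, 0 < π.1) : simplePatternClosure C ⊆ substClosure C := by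
  obtain ⟨x₀, hx₀, hx₀pos⟩ := hne
  rintro ⟨N, π⟩ hπ
  induction N using Nat.strong_induction_on with
  | _ N ih =>
  by_cases hsimple : IsSimple π
  · exact subset_substClosure C (hπ ⟨N, π⟩ hsimple (.refl _))
  by_cases hN : N ≤ 1
  · exact subset_substClosure C (hC _ x₀ (.of_length_le_one hN (show N ≤ x₀.1 by omega)) hx₀)
  obtain ⟨m, σ, n, α, hm, hn, heq⟩ :=
    exists_eq_inflation_of_not_isSimple (by omega) hsimple
  rw [heq] at hπ ⊢
  have hpattern : ∀ {k} (ρ : PermOf k), PattContains ρ (inflation σ α) → k < N →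
      (⟨k, ρ⟩ : Permutation) ∈ substClosure C := fun ρ hρ hk =>
    ih _ hk ρ (isPermClass_simplePatternClosure C _ ⟨_, inflation σ α⟩ hρ hπ)
  exact substClosed_substClosure C ⟨m, σ, n, α,
    hpattern σ (pattContains_inflation_skeleton σ α fun i => (hn i).1) hm, fun i => (hn i).1,
    fun i => hpattern (α i) (pattContains_inflation_block σ α i) (hn i).2, rfl⟩

theorem substClosure_eq_simplePatternClosure {C : Set Permutation} (hC : IsPermClass C)
    (hne : ∃ π ∈ C, 0 < π.1) : substClosure C = simplePatternClosure C :=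
  (substClosure_subset (isPermClass_simplePatternClosure C) (substClosed_simplePatternClosure C)
    (subset_simplePatternClosure hC)).antisymm
    (simplePatternClosure_subset_substClosure hC hne)

theorem basisOf_simplePatternClosure (C : Set Permutation) :
    basisOf (simplePatternClosure C) =
      {π : Permutation | IsSimple π.2 ∧ π ∉ C ∧
        ∀ σ : Permutation, IsSimple σ.2 → σ ∉ C → PermLe σ π → σ = π} := by
  ext π
  constructor
  · rintro ⟨hπ, hmin⟩
    have hminimal : ∀ σ : Permutation, IsSimple σ.2 → σ ∉ C → PermLe σ π → σ = π :=
      fun σ hσ hσC hσπ => by_contra fun hne => hσC (hmin σ hσπ hne σ hσ (.refl σ))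
    obtain ⟨t, ht, htπ, htC⟩ : ∃ t : Permutation, IsSimple t.2 ∧ PermLe t π ∧ t ∉ C := by
      simpa [simplePatternClosure] using hπ
    obtain rfl := hminimal t ht htC htπ
    exact ⟨ht, htC, hminimal⟩
  · rintro ⟨hπ, hπC, hmin⟩
    refine ⟨fun h => hπC (h π hπ (.refl π)), fun σ hσπ hne t ht htσ => by_contra fun htC => ?_⟩
    obtain rfl := hmin t ht htC (htσ.trans hσπ)
    exact hne (hσπ.antisymm htσ)

end SubstitutionClosure

/-- The basis of the substitution closure of a nonempty class `C` consists of the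
containment-minimal simple permutations not in `C`. -/
theorem basis_of_substClosure
    (C : Set Permutation) (hC : IsPermClass C) (hne : ∃ π ∈ C, 0 < π.1) :
    basisOf (substClosure C) =
      {π : Permutation | IsSimple π.2 ∧ π ∉ C ∧
        ∀ σ : Permutation, IsSimple σ.2 → σ ∉ C → PermLe σ π → σ = π} := by
  rw [substClosure_eq_simplePatternClosure hC hne, basisOf_simplePatternClosure]
end
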